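/- Fix δ ∈ (0, 1/4) and R > 0. For every x, x₀ ∈ ℝ² with |x - x₀| ≥ R and every t with t₀ - t ∈ [δ²R², 4δ²R²], one has (t₀ - t)^{-1} exp(-|x-x₀|²/(4(t₀-t))) ≤ 2 δ^{-2} exp(-1/(32 δ²)) · (t₀ + R² - t)^{-1} exp(-|x-x₀|²/(4(t₀ + R² - t))). -/

import Mathlib

/-! For `s = t₀ - t`, the shift by `R²` costs at most the factor `2 δ⁻²` in the prefactor
`s⁻¹`, since `s ≥ δ² R²`. In the exponent it gains
`ρ²/(4s) - ρ²/(4(s + R²)) = ρ² R² / (4 s (s + R²)) ≥ 1/(32 δ²)`,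
because `s ≤ 4 δ² R²`, `s + R² ≤ 2 R²` and `ρ ≥ R`. -/

open Real

/-- The backward heat kernel in the plane as a function of the time gap `s = t₀ - t`
and the distance `ρ = |x - x₀|`. -/
noncomputable def heatProfile (s ρ : ℝ) : ℝ := s⁻¹ * exp (-ρ ^ 2 / (4 * s))

lemma inv_le_two_mul_inv_sq_mul_inv_add {δ R s : ℝ} (hδ : 0 < δ) (hδ1 : δ ≤ 1) (hs : 0 < s)
    (hsR : δ ^ 2 * R ^ 2 ≤ s) : s⁻¹ ≤ 2 * δ⁻¹ ^ 2 * (s + R ^ 2)⁻¹ := by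
  have hδsq : δ ^ 2 ≤ 1 := pow_le_one₀ hδ.le hδ1
  rw [show 2 * δ⁻¹ ^ 2 * (s + R ^ 2)⁻¹ = 2 / (δ ^ 2 * (s + R ^ 2)) by field_simp,
    inv_eq_one_div, div_le_div_iff₀ hs (by positivity)]
  nlinarith

lemma one_div_le_sq_mul_sq_div {δ R s ρ : ℝ} (hδ : 0 < δ) (hδhalf : δ ≤ 1 / 2) (hR : 0 ≤ R)
    (hRρ : R ≤ ρ) (hs : 0 < s) (hsR : s ≤ 4 * δ ^ 2 * R ^ 2) :
    1 / (32 * δ ^ 2) ≤ ρ ^ 2 * R ^ 2 / (4 * s * (s + R ^ 2)) := by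
  have hρR : R ^ 2 ≤ ρ ^ 2 := pow_le_pow_left₀ hR hRρ 2
  have hδsq : 4 * δ ^ 2 ≤ 1 := by nlinarith
  have hshift : s + R ^ 2 ≤ 2 * R ^ 2 := by
    nlinarith [mul_le_mul_of_nonneg_right hδsq (sq_nonneg R)]
  rw [div_le_div_iff₀ (by positivity) (by positivity), one_mul]
  calc 4 * s * (s + R ^ 2)
      ≤ 4 * (4 * δ ^ 2 * R ^ 2) * (2 * R ^ 2) := by gcongr
    _ = 32 * δ ^ 2 * (R ^ 2 * R ^ 2) := by ring
    _ ≤ 32 * δ ^ 2 * (ρ ^ 2 * R ^ 2) := by gcongr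
    _ = ρ ^ 2 * R ^ 2 * (32 * δ ^ 2) := by ring

lemma neg_sq_div_le_of_shift {δ R s ρ : ℝ} (hδ : 0 < δ) (hδhalf : δ ≤ 1 / 2) (hR : 0 ≤ R)
    (hRρ : R ≤ ρ) (hs : 0 < s) (hsR : s ≤ 4 * δ ^ 2 * R ^ 2) :
    -ρ ^ 2 / (4 * s) ≤ -1 / (32 * δ ^ 2) + -ρ ^ 2 / (4 * (s + R ^ 2)) := by
  have hsplit : -ρ ^ 2 / (4 * s) = -(ρ ^ 2 * R ^ 2 / (4 * s * (s + R ^ 2))) +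
      -ρ ^ 2 / (4 * (s + R ^ 2)) := by
    field_simp
    ring
  linarith [one_div_le_sq_mul_sq_div hδ hδhalf hR hRρ hs hsR, neg_div (32 * δ ^ 2) 1]

theorem heatProfile_le_of_shift {δ R s ρ : ℝ} (hδ : 0 < δ) (hδhalf : δ ≤ 1 / 2) (hR : 0 < R)
    (hRρ : R ≤ ρ) (hs : s ∈ Set.Icc (δ ^ 2 * R ^ 2) (4 * δ ^ 2 * R ^ 2)) :
    heatProfile s ρ ≤ 2 * δ⁻¹ ^ 2 * exp (-1 / (32 * δ ^ 2)) * heatProfile (s + R ^ 2) ρ := by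
  have hs0 : 0 < s := lt_of_lt_of_le (by positivity) hs.1
  have hexp : exp (-ρ ^ 2 / (4 * s)) ≤
      exp (-1 / (32 * δ ^ 2)) * exp (-ρ ^ 2 / (4 * (s + R ^ 2))) := by
    rw [← exp_add, exp_le_exp]
    exact neg_sq_div_le_of_shift hδ hδhalf hR.le hRρ hs0 hs.2
  calc heatProfile s ρ
      ≤ (2 * δ⁻¹ ^ 2 * (s + R ^ 2)⁻¹) *
          (exp (-1 / (32 * δ ^ 2)) * exp (-ρ ^ 2 / (4 * (s + R ^ 2)))) :=
        mul_le_mul (inv_le_two_mul_inv_sq_mul_inv_add hδ (by linarith) hs0 hs.1) hexp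
          (exp_pos _).le (by positivity)
    _ = _ := by unfold heatProfile; ring

theorem stmt6 (δ R t t₀ : ℝ) (hδ : δ ∈ Set.Ioo (0 : ℝ) (1/4)) (hR : 0 < R)
    (x x₀ : EuclideanSpace ℝ (Fin 2)) (hx : R ≤ ‖x - x₀‖)
    (ht : t₀ - t ∈ Set.Icc (δ ^ 2 * R ^ 2) (4 * δ ^ 2 * R ^ 2)) :
    (t₀ - t)⁻¹ * Real.exp (-‖x - x₀‖ ^ 2 / (4 * (t₀ - t))) ≤
      2 * δ⁻¹ ^ 2 * Real.exp (-1 / (32 * δ ^ 2)) *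
        ((t₀ + R ^ 2 - t)⁻¹ * Real.exp (-‖x - x₀‖ ^ 2 / (4 * (t₀ + R ^ 2 - t)))) := by
  rw [show t₀ + R ^ 2 - t = t₀ - t + R ^ 2 by ring]
  exact heatProfile_le_of_shift hδ.1 (by linarith [hδ.2]) hR hx ht
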